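/- arXiv:1511.04035 — 3 statements merged into one kernel-verified Lean document; each statement's English description precedes it below -/
import Mathlib

section
/- Let L ≥ 2 be even and let A = {1, L, L+1}. Then for every n ∈ ℕ, W_A(n) = II if and only if n mod 2L ∈ {0, 2, 4, …, L−2}. -/
/-!
The positions lost by the player to move are the unique set `P` such that a position lies in `P`
exactly when no move leads into `P`. For `A = {1, L, L + 1}` with `L` even, a move changes the
residue `r = n % (2L)` by `-1`, `-L` or `-(L + 1)` modulo `2L`, and one checks on residues that
`r ∈ {0, 2, …, L - 2}` has this property: from such `r` every move gives an odd residue or one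
in `[L, 2L)`, while from any other residue one of the three moves lands in `{0, 2, …, L - 2}`.
-/

/-- Standard NIM winner for the one-pile subtraction game with move set `A`:
`nimW A n = true` means Player I (the player to move) wins with `n` stones;
`nimW A n = false` means Player II wins.  (For `A` consisting of positive
integers this is exactly: Player I wins iff some `a ∈ A` with `a ≤ n` moves to
a Player-II-win position `n - a`.) -/
def nimW (A : Finset ℕ) : ℕ → Bool
  | n =>
    decide (((A.filter fun a => 0 < a ∧ a ≤ n).attach.filter (fun a =>
      nimW A (n - a.1) = false)).Nonempty)
decreasing_by
  all_goals
    have h := a.2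
    simp only [Finset.mem_filter] at h
    omega

theorem nimW_eq_true_iff (A : Finset ℕ) (n : ℕ) :
    nimW A n = true ↔ ∃ a ∈ A, 0 < a ∧ a ≤ n ∧ nimW A (n - a) = false := by
  rw [nimW, decide_eq_true_iff]
  simp only [Finset.Nonempty, Finset.mem_filter, Finset.mem_attach, true_and,
    Subtype.exists, exists_prop]
  constructor
  · rintro ⟨a, ⟨haA, hpos, han⟩, hlose⟩
    exact ⟨a, haA, hpos, han, hlose⟩
  · rintro ⟨a, haA, hpos, han, hlose⟩
    exact ⟨a, ⟨haA, hpos, han⟩, hlose⟩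

theorem nimW_eq_false_iff_of_forall {A : Finset ℕ} {P : ℕ → Prop}
    (hP : ∀ n, P n ↔ ∀ a ∈ A, 0 < a → a ≤ n → ¬ P (n - a)) (n : ℕ) :
    nimW A n = false ↔ P n := by
  induction n using Nat.strong_induction_on with
  | _ n ih =>
    rw [← Bool.not_eq_true, nimW_eq_true_iff, hP n]
    push Not
    exact forall₂_congr fun a _ => forall_congr' fun hpos => forall_congr' fun _ =>
      not_congr (ih (n - a) (by omega))

theorem Nat.sub_mod_of_le_mod {m a n : ℕ} (h : a ≤ n % m) : (n - a) % m = n % m - a := by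
  rcases m.eq_zero_or_pos with rfl | hm
  · simp
  have hdiv := Nat.div_add_mod n m
  have hrep : n - a = n % m - a + m * (n / m) := by omega
  rw [hrep, Nat.add_mul_mod_self_left, Nat.mod_eq_of_lt (by have := n.mod_lt hm; omega)]

theorem Nat.sub_mod_of_mod_lt {m a n : ℕ} (ham : a ≤ m) (han : a ≤ n) (h : n % m < a) :
    (n - a) % m = n % m + m - a := by
  have hm : 0 < m := by omega
  have hdiv := Nat.div_add_mod n m
  obtain ⟨q, hq⟩ : ∃ q, n / m = q + 1 := by
    refine Nat.exists_eq_add_one.mpr (Nat.pos_of_ne_zero fun h0 => ?_)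
    rw [h0] at hdiv
    omega
  rw [hq, Nat.mul_succ] at hdiv
  have hrep : n - a = n % m + m - a + m * q := by omega
  rw [hrep, Nat.add_mul_mod_self_left, Nat.mod_eq_of_lt (by omega)]

def IsLowEvenResidue (L n : ℕ) : Prop :=
  Even (n % (2 * L)) ∧ n % (2 * L) ≤ L - 2

section OneLLSucc

variable {L : ℕ}

theorem not_isLowEvenResidue_sub (hL : 2 ≤ L) (hLeven : Even L) {n a : ℕ}
    (ha : a ∈ ({1, L, L + 1} : Finset ℕ)) (han : a ≤ n) (hn : IsLowEvenResidue L n) :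
    ¬ IsLowEvenResidue L (n - a) := by
  obtain ⟨k, rfl⟩ := hLeven
  simp only [Finset.mem_insert, Finset.mem_singleton] at ha
  simp only [IsLowEvenResidue, Nat.even_iff] at hn ⊢
  rcases le_or_gt a (n % (2 * (k + k))) with hle | hlt
  · rw [Nat.sub_mod_of_le_mod hle]
    omega
  · rw [Nat.sub_mod_of_mod_lt (by omega) han hlt]
    omega

theorem exists_isLowEvenResidue_sub (hL : 2 ≤ L) (hLeven : Even L) {n : ℕ}
    (hn : ¬ IsLowEvenResidue L n) :
    ∃ a ∈ ({1, L, L + 1} : Finset ℕ), a ≤ n ∧ IsLowEvenResidue L (n - a) := by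
  obtain ⟨k, rfl⟩ := hLeven
  simp only [Finset.mem_insert, Finset.mem_singleton, exists_eq_or_imp, exists_eq_left]
  simp only [IsLowEvenResidue, Nat.even_iff] at hn ⊢
  have hr : n % (2 * (k + k)) < 2 * (k + k) := Nat.mod_lt n (by omega)
  have hrn : n % (2 * (k + k)) ≤ n := Nat.mod_le n _
  rcases Nat.mod_two_eq_zero_or_one (n % (2 * (k + k))) with heven | hodd
  · right; left
    refine ⟨by omega, ?_⟩
    rw [Nat.sub_mod_of_le_mod (by omega)]
    omega
  · by_cases hsmall : n % (2 * (k + k)) < k + k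
    · left
      refine ⟨by omega, ?_⟩
      rw [Nat.sub_mod_of_le_mod (by omega)]
      omega
    · right; right
      refine ⟨by omega, ?_⟩
      rw [Nat.sub_mod_of_le_mod (by omega)]
      omega

theorem isLowEvenResidue_iff_forall_sub (hL : 2 ≤ L) (hLeven : Even L) (n : ℕ) :
    IsLowEvenResidue L n ↔ ∀ a ∈ ({1, L, L + 1} : Finset ℕ), 0 < a → a ≤ n →
      ¬ IsLowEvenResidue L (n - a) := by
  refine ⟨fun hn a ha _ han => not_isLowEvenResidue_sub hL hLeven ha han hn, fun h => ?_⟩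
  by_contra hn
  obtain ⟨a, ha, han, hlow⟩ := exists_isLowEvenResidue_sub hL hLeven hn
  have hpos : 0 < a := by
    simp only [Finset.mem_insert, Finset.mem_singleton] at ha
    omega
  exact h a ha hpos han hlow

end OneLLSucc

/-- For even `L ≥ 2` and `A = {1, L, L+1}`,
Player II wins standard NIM with `n` stones iff
`n mod 2L ∈ {0, 2, 4, …, L-2}`. -/
theorem nim_one_L_Lsucc_even_winCondition (L : ℕ) (hL : 2 ≤ L) (hLeven : Even L)
    (n : ℕ) :
    nimW ({1, L, L + 1} : Finset ℕ) n = false ↔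
      Even (n % (2 * L)) ∧ n % (2 * L) ≤ L - 2 :=
  nimW_eq_false_iff_of_forall (isLowEvenResidue_iff_forall_sub hL hLeven) n
end

section
/- Let A be a finite nonempty set of positive integers with a1 = min A. For all n, d, e ∈ ℕ: if d < gI(n) and e < gII(n), then W_A^$(n;d,e) = I if and only if ⌊d/a1⌋ > ⌊e/a1⌋. -/
/-- NIM-with-cash winner: `nimWC A n d e = true` means the player to move,
having `d` dollars while the opponent has `e` dollars, wins with `n` stones
on the board.  The player to move wins iff there is `a ∈ A` with `a ≤ n`
and `a ≤ d` such that the resulting position `(n - a; e, d - a)` is a loss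
for the (new) player to move. -/
def nimWC (A : Finset ℕ) : ℕ → ℕ → ℕ → Bool
  | n, d, e =>
    decide (((A.filter fun a => 0 < a ∧ a ≤ n ∧ a ≤ d).attach.filter (fun a =>
      nimWC A (n - a.1) e (d - a.1) = false)).Nonempty)
decreasing_by
  all_goals
    have h := a.2
    simp only [Finset.mem_filter] at h
    omega

/-- `gI a1 n = (n - i)/2 + min (i+1) a1` where `i = n mod 2*a1`:
the poorness threshold for the player to move. -/
def gI (a1 n : ℕ) : ℕ := (n - n % (2 * a1)) / 2 + min (n % (2 * a1) + 1) a1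

/-- `gII a1 n = (n - i)/2 + max 0 (i - a1 + 1)` where `i = n mod 2*a1`
(the `max` with `0` is realized by truncated subtraction `(i + 1) - a1`):
the poorness threshold for the player not moving. -/
def gII (a1 n : ℕ) : ℕ := (n - n % (2 * a1)) / 2 + (n % (2 * a1) + 1 - a1)

lemma nimWC_eq (A : Finset ℕ) (n d e : ℕ) :
    nimWC A n d e = true ↔
      ∃ a ∈ A, (0 < a ∧ a ≤ n ∧ a ≤ d) ∧ nimWC A (n - a) e (d - a) = false := by
  rw [nimWC]
  simp [Finset.filter_nonempty_iff, Finset.mem_filter, and_assoc]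

lemma gI_eq {a1 : ℕ} {n q i : ℕ} (hn : n = 2*a1*q + i) (hi : i < 2*a1) :
    gI a1 n = a1*q + min (i+1) a1 := by
  have h1 : n % (2*a1) = i := by
    subst hn; rw [Nat.mul_add_mod, Nat.mod_eq_of_lt hi]
  have h2 : (n - i) / 2 = a1*q := by
    subst hn; rw [Nat.add_sub_cancel, mul_assoc, Nat.mul_div_cancel_left _ (by norm_num : (0:ℕ) < 2)]
  unfold gI; rw [h1, h2]

lemma gII_eq {a1 : ℕ} {n q i : ℕ} (hn : n = 2*a1*q + i) (hi : i < 2*a1) :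
    gII a1 n = a1*q + (i + 1 - a1) := by
  have h1 : n % (2*a1) = i := by
    subst hn; rw [Nat.mul_add_mod, Nat.mod_eq_of_lt hi]
  have h2 : (n - i) / 2 = a1*q := by
    subst hn; rw [Nat.add_sub_cancel, mul_assoc, Nat.mul_div_cancel_left _ (by norm_num : (0:ℕ) < 2)]
  unfold gII; rw [h1, h2]

lemma g_rep {a1 : ℕ} (ha : 0 < a1) (n : ℕ) : ∃ q i, n = 2*a1*q + i ∧ i < 2*a1 :=
  ⟨n / (2*a1), n % (2*a1), (Nat.div_add_mod n (2*a1)).symm, Nat.mod_lt _ (by omega)⟩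

lemma g_sum {a1 : ℕ} (ha : 0 < a1) (n : ℕ) : gI a1 n + gII a1 n = n + 1 := by
  obtain ⟨q, i, hn, hi⟩ := g_rep ha n
  rw [gI_eq hn hi, gII_eq hn hi, hn]
  have h : 2*a1*q = a1*q + a1*q := by ring
  omega

lemma gI_step {a1 : ℕ} (ha : 0 < a1) (n : ℕ) :
    gI a1 n ≤ gI a1 (n+1) ∧ gI a1 (n+1) ≤ gI a1 n + 1 := by
  obtain ⟨q, i, hn, hi⟩ := g_rep ha n
  rcases lt_or_ge (i+1) (2*a1) with h | h
  · rw [gI_eq hn hi, gI_eq (show n+1 = 2*a1*q + (i+1) by omega) h]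
    omega
  · have hi1 : i + 1 = 2*a1 := by omega
    have h1 : 2*a1*(q+1) = 2*a1*q + 2*a1 := by ring
    rw [gI_eq hn hi, gI_eq (show n+1 = 2*a1*(q+1) + 0 by omega) (by omega)]
    have h2 : a1*(q+1) = a1*q + a1 := by ring
    omega

lemma gI_mono {a1 : ℕ} (ha : 0 < a1) {m n : ℕ} (h : m ≤ n) : gI a1 m ≤ gI a1 n := by
  induction n, h using Nat.le_induction with
  | base => exact le_refl _
  | succ n hmn ih => exact le_trans ih (gI_step ha n).1

lemma gII_lipschitz {a1 : ℕ} (ha : 0 < a1) {m n : ℕ} (h : m ≤ n) :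
    gII a1 n ≤ gII a1 m + (n - m) := by
  have h1 := g_sum ha m
  have h2 := g_sum ha n
  have h3 := gI_mono ha h
  omega

lemma gI_reflect {a1 : ℕ} (ha : 0 < a1) {n : ℕ} (h : a1 ≤ n) :
    gI a1 (n - a1) = gII a1 n := by
  obtain ⟨q, i, hn, hi⟩ := g_rep ha n
  rcases le_or_gt a1 i with hia | hia
  · rw [gII_eq hn hi, gI_eq (show n - a1 = 2*a1*q + (i - a1) by omega) (by omega)]
    omega
  · rcases q with _ | q'
    · exfalso; omega
    · have h2 : 2*a1*(q'+1) = 2*a1*q' + 2*a1 := by ring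
      have h3 : a1*(q'+1) = a1*q' + a1 := by ring
      rw [gII_eq hn hi, gI_eq (show n - a1 = 2*a1*q' + (i + a1) by omega) (by omega)]
      omega

lemma gI_small {a1 : ℕ} (ha : 0 < a1) {n : ℕ} (h : n < a1) :
    gI a1 n = n + 1 ∧ gII a1 n = 0 := by
  rw [gI_eq (show n = 2*a1*0 + n by ring) (by omega),
      gII_eq (show n = 2*a1*0 + n by ring) (by omega)]
  omega

lemma gI_ge {a1 : ℕ} (ha : 0 < a1) {n : ℕ} (h : a1 ≤ n) : a1 ≤ gI a1 n := by
  obtain ⟨q, i, hn, hi⟩ := g_rep ha n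
  rw [gI_eq hn hi]
  rcases q with _ | q'
  · omega
  · have h3 : a1*(q'+1) = a1*q' + a1 := by ring
    omega

theorem nimWC_main (A : Finset ℕ) (hA : A.Nonempty) (hpos : ∀ a ∈ A, 0 < a)
    (a1 : ℕ) (ha1 : a1 = A.min' hA) :
    ∀ n d e : ℕ,
      (d < gI a1 n → gII a1 n ≤ e → nimWC A n d e = false) ∧
      (d < gI a1 n → e < gII a1 n → (nimWC A n d e = true ↔ e / a1 < d / a1)) ∧
      (gI a1 n ≤ d → e < gII a1 n → nimWC A n d e = true) := by
  have ha : 0 < a1 := ha1 ▸ hpos _ (A.min'_mem hA)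
  have hmin : ∀ a ∈ A, a1 ≤ a := fun a haA => ha1 ▸ A.min'_le a haA
  have ha1A : a1 ∈ A := ha1 ▸ A.min'_mem hA
  intro n
  induction n using Nat.strong_induction_on with
  | _ n IH =>
  intro d e
  refine ⟨?_, ?_, ?_⟩
  · -- P1: mover poor, opponent rich ⇒ lose
    intro hd he
    by_contra hcon
    have hW0 : nimWC A n d e = true := by revert hcon; cases nimWC A n d e <;> simp
    obtain ⟨a, haA, ⟨hpa, han, had⟩, hW⟩ := (nimWC_eq A n d e).mp hW0
    have ha1a := hmin a haA
    have hn1 : a1 ≤ n := le_trans ha1a han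
    have hrich : gI a1 (n - a) ≤ e :=
      le_trans (le_trans (gI_mono ha (show n - a ≤ n - a1 by omega))
        (le_of_eq (gI_reflect ha hn1))) he
    have hpoor : d - a < gII a1 (n - a) := by
      have h1 := gII_lipschitz ha (show n - a ≤ n - a1 by omega)
      have h2 := gI_reflect ha hn1
      have h3 := g_sum ha (n - a1)
      have h4 := g_sum ha n
      omega
    have := (IH (n - a) (by omega) e (d - a)).2.2 hrich hpoor
    rw [this] at hW
    simp at hW
  · -- P2: both poor ⇒ division comparison
    intro hd he
    rcases lt_or_ge (e / a1) (d / a1) with hlt | hge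
    · simp only [hlt, iff_true]
      have hda1 : a1 ≤ d := by
        by_contra h
        push_neg at h
        have h0 : d / a1 = 0 := Nat.div_eq_of_lt h
        rw [h0] at hlt
        exact absurd hlt (Nat.not_lt_zero _)
      have hna1 : a1 ≤ n := by
        by_contra h
        push_neg at h
        have := gI_small ha (show n < a1 by omega)
        omega
      rw [nimWC_eq]
      refine ⟨a1, ha1A, ⟨ha, hna1, hda1⟩, ?_⟩
      have h2 := gI_reflect ha hna1
      have h3 := g_sum ha (n - a1)
      have h4 := g_sum ha n
      have hiff := (IH (n - a1) (by omega) e (d - a1)).2.1 (by omega) (by omega)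
      by_contra hcon
      have hW0 : nimWC A (n - a1) e (d - a1) = true := by
        revert hcon; cases nimWC A (n - a1) e (d - a1) <;> simp
      have hlt' := hiff.mp hW0
      have hdiv := Nat.div_eq_sub_div ha hda1
      rw [hdiv] at hlt
      exact absurd hlt' (Nat.not_lt.mpr (Nat.lt_succ_iff.mp hlt))
    · have hnot : ¬ (e / a1 < d / a1) := not_lt.mpr hge
      simp only [hnot, iff_false]
      by_contra hcon
      have hW0 : nimWC A n d e = true := by revert hcon; cases nimWC A n d e <;> simp
      obtain ⟨a, haA, ⟨hpa, han, had⟩, hW⟩ := (nimWC_eq A n d e).mp hW0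
      have ha1a := hmin a haA
      have hn1 : a1 ≤ n := le_trans ha1a han
      have hpoor : d - a < gII a1 (n - a) := by
        have h1 := gII_lipschitz ha (show n - a ≤ n - a1 by omega)
        have h2 := gI_reflect ha hn1
        have h3 := g_sum ha (n - a1)
        have h4 := g_sum ha n
        omega
      rcases lt_or_ge e (gI a1 (n - a)) with hre | hre
      · have hiff := (IH (n - a) (by omega) e (d - a)).2.1 hre hpoor
        have hda1 : a1 ≤ d := le_trans ha1a had
        have htrue : nimWC A (n - a) e (d - a) = true := by
          rw [hiff]
          have hdiv := Nat.div_eq_sub_div ha hda1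
          calc (d - a) / a1 ≤ (d - a1) / a1 := Nat.div_le_div_right (by omega)
            _ < d / a1 := by rw [hdiv]; exact Nat.lt_succ_self _
            _ ≤ e / a1 := hge
        rw [htrue] at hW
        simp at hW
      · have := (IH (n - a) (by omega) e (d - a)).2.2 hre hpoor
        rw [this] at hW
        simp at hW
  · -- P3: mover rich, opponent poor ⇒ win
    intro hd he
    have hna1 : a1 ≤ n := by
      by_contra h
      push_neg at h
      have := gI_small ha h
      omega
    have hga : a1 ≤ gI a1 n := gI_ge ha hna1
    rw [nimWC_eq]
    refine ⟨a1, ha1A, ⟨ha, hna1, le_trans hga hd⟩, ?_⟩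
    have h2 := gI_reflect ha hna1
    have h3 := g_sum ha (n - a1)
    have h4 := g_sum ha n
    exact (IH (n - a1) (by omega) e (d - a1)).1 (by omega) (by omega)

/-- With `a1 = min A`: if both players are poor
(`d < gI n` and `e < gII n`), the player to move wins iff `⌊d/a1⌋ > ⌊e/a1⌋`. -/
theorem nimWC_both_poor (A : Finset ℕ) (hA : A.Nonempty) (hpos : ∀ a ∈ A, 0 < a)
    (a1 : ℕ) (ha1 : a1 = A.min' hA) (n d e : ℕ)
    (hd : d < gI a1 n) (he : e < gII a1 n) :
    nimWC A n d e = true ↔ e / a1 < d / a1 :=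
  (nimWC_main A hA hpos a1 ha1 n d e).2.1 hd he
end

section
/- Let A be a finite nonempty set of positive integers with a1 = min A. For every n ∈ ℕ and every a ∈ A with a ≤ n: gI(n − a) ≤ gII(n). (Equivalently, if e > gII(n) then e > gI(n − a).) -/
lemma gI_eq_s16 (a1 k : ℕ) : gI a1 k = a1 * (k / (2 * a1)) + min (k % (2 * a1) + 1) a1 := by
  unfold gI
  have h1 : k - k % (2 * a1) = 2 * a1 * (k / (2 * a1)) := by
    have := Nat.div_add_mod k (2 * a1); omega
  rw [h1, mul_assoc, Nat.mul_div_cancel_left _ (by norm_num : 0 < 2)]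

lemma gII_eq_s16 (a1 k : ℕ) : gII a1 k = a1 * (k / (2 * a1)) + (k % (2 * a1) + 1 - a1) := by
  unfold gII
  have h1 : k - k % (2 * a1) = 2 * a1 * (k / (2 * a1)) := by
    have := Nat.div_add_mod k (2 * a1); omega
  rw [h1, mul_assoc, Nat.mul_div_cancel_left _ (by norm_num : 0 < 2)]

/-- With `a1 = min A`: for every `a ∈ A` with `a ≤ n`,
`gI (n - a) ≤ gII n` (equivalently, if `e > gII n` then `e > gI (n - a)`). -/
theorem gI_sub_le_gII (A : Finset ℕ) (hA : A.Nonempty) (hpos : ∀ a ∈ A, 0 < a)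
    (a1 : ℕ) (ha1 : a1 = A.min' hA) (n : ℕ) (a : ℕ) (haA : a ∈ A) (han : a ≤ n) :
    gI a1 (n - a) ≤ gII a1 n := by
  have ha1a : a1 ≤ a := ha1 ▸ A.min'_le a haA
  rw [gI_eq_s16, gII_eq_s16]
  set m := 2 * a1 with hm
  have hqle : (n - a) / m ≤ n / m := Nat.div_le_div_right (Nat.sub_le n a)
  rcases eq_or_lt_of_le hqle with heq | hlt
  · rw [heq]
    have e1 := Nat.div_add_mod (n - a) m
    have e2 := Nat.div_add_mod n m
    rw [heq] at e1
    generalize hP : m * (n / m) = P at e1 e2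
    have h : (n - a) % m + a1 ≤ n % m + 1 := by omega
    exact Nat.add_le_add_left (by omega) _
  · have h1 : min ((n - a) % m + 1) a1 ≤ a1 := min_le_right _ _
    have h2 : a1 * ((n - a) / m + 1) ≤ a1 * (n / m) := Nat.mul_le_mul_left _ hlt
    have h3 : a1 * ((n - a) / m + 1) = a1 * ((n - a) / m) + a1 := by ring
    omega
end
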